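/- arXiv:2407.06198 — 5 statements merged into one kernel-verified Lean document; each statement's English description precedes it below -/
import Mathlib

section
/- Let P be an n×n row-stochastic matrix, λ ∈ (0,1), and v a probability vector. Then the vector π defined by π^T = v^T (1−λ)(Id − λP)^{-1} is the unique vector with π^T G = π^T and ∑_i π_i = 1, where G = λP + (1−λ)e v^T. Moreover if v > 0 componentwise then π > 0 componentwise. -/
/-!
Since `P` is row-stochastic and `0 ≤ l < 1`, the matrix `1 - l • P` satisfies a discrete minimum
principle: `(1 - l • P) *ᵥ x ≥ 0` forces `x ≥ 0`. Hence `1 - l • P` is invertible and its inverse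
is entrywise nonnegative. On vectors with entry sum `1`, the equation `x G = x` is the linear
system `x (1 - l • P) = (1 - l) • v`, whose unique solution is `π`; summing its entries shows that
`π` sums to `1`. Finally `π = l • π P + (1 - l) • v` with `π ≥ 0` gives `π i ≥ (1 - l) * v i`.
-/

open Finset

namespace Matrix

section CommRing

variable {ι R : Type*} [Fintype ι] [CommRing R] {P G : Matrix ι ι R} {l : R} {v : ι → R}

lemma vecMul_eq_smul_vecMul_add_smul (hG : ∀ i j, G i j = l * P i j + (1 - l) * v j)
    (x : ι → R) : x ᵥ* G = l • (x ᵥ* P) + ((1 - l) * ∑ i, x i) • v := by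
  ext j
  simp only [vecMul, dotProduct, hG, Pi.add_apply, Pi.smul_apply, smul_eq_mul, mul_sum, sum_mul,
    ← sum_add_distrib]
  exact sum_congr rfl fun i _ ↦ by ring

end CommRing

section OrderedField

variable {ι R : Type*} [Fintype ι] [DecidableEq ι] [Field R] [LinearOrder R] [IsStrictOrderedRing R]
  {P : Matrix ι ι R} {l : R}

lemma le_mulVec_of_mem_rowStochastic (hP : P ∈ rowStochastic R ι) {x : ι → R} {c : R}
    (hc : ∀ j, c ≤ x j) (i : ι) : c ≤ (P *ᵥ x) i :=
  calc c = ∑ j, P i j * c := by rw [← sum_mul, sum_row_of_mem_rowStochastic hP, one_mul]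
    _ ≤ ∑ j, P i j * x j :=
      sum_le_sum fun j _ ↦ mul_le_mul_of_nonneg_left (hc j) (nonneg_of_mem_rowStochastic hP)

lemma sum_vecMul_of_mem_rowStochastic (hP : P ∈ rowStochastic R ι) (x : ι → R) :
    ∑ j, (x ᵥ* P) j = ∑ i, x i := by
  rw [← dotProduct_one, ← dotProduct_one, ← dotProduct_mulVec, one_vecMul_of_mem_rowStochastic hP]

/-- At a minimal entry `x k` we have `x k ≤ (P *ᵥ x) k`, so `((1 - l • P) *ᵥ x) k ≤ (1 - l) * x k`. -/
lemma nonneg_of_nonneg_one_sub_smul_mulVec (hP : P ∈ rowStochastic R ι) (hl0 : 0 ≤ l)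
    (hl1 : l < 1) {x : ι → R} (hx : 0 ≤ (1 - l • P) *ᵥ x) : 0 ≤ x := by
  intro i
  by_contra! hneg
  have : Nonempty ι := ⟨i⟩
  obtain ⟨k, hk⟩ := Finite.exists_min x
  have hxk : x k < 0 := (hk i).trans_lt hneg
  have hPk : x k ≤ (P *ᵥ x) k := le_mulVec_of_mem_rowStochastic hP hk k
  have hAk : 0 ≤ x k - l * (P *ᵥ x) k := by
    simpa only [sub_mulVec, one_mulVec, smul_mulVec, Pi.sub_apply, Pi.smul_apply, smul_eq_mul,
      Pi.zero_apply] using hx k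
  nlinarith [mul_le_mul_of_nonneg_left hPk hl0]

lemma isUnit_one_sub_smul_of_mem_rowStochastic (hP : P ∈ rowStochastic R ι) (hl0 : 0 ≤ l)
    (hl1 : l < 1) : IsUnit (1 - l • P) := by
  have hker : ∀ z, (1 - l • P) *ᵥ z = 0 → 0 ≤ z := fun z hz ↦
    nonneg_of_nonneg_one_sub_smul_mulVec hP hl0 hl1 hz.ge
  refine mulVec_injective_iff_isUnit.1 fun x y hxy ↦ ?_
  have hsub : (1 - l • P) *ᵥ (x - y) = 0 := by rw [mulVec_sub, hxy, sub_self]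
  have hsub' : (1 - l • P) *ᵥ -(x - y) = 0 := by rw [mulVec_neg, hsub, neg_zero]
  exact sub_eq_zero.1 (le_antisymm (neg_nonneg.1 (hker _ hsub')) (hker _ hsub))

lemma inv_one_sub_smul_nonneg_of_mem_rowStochastic (hP : P ∈ rowStochastic R ι) (hl0 : 0 ≤ l)
    (hl1 : l < 1) (i j : ι) : 0 ≤ (1 - l • P)⁻¹ i j := by
  have hA := (isUnit_iff_isUnit_det _).1 (isUnit_one_sub_smul_of_mem_rowStochastic hP hl0 hl1)
  have hcol : (1 - l • P) *ᵥ ((1 - l • P)⁻¹ *ᵥ Pi.single j 1) = Pi.single j 1 := by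
    rw [mulVec_mulVec, mul_nonsing_inv _ hA, one_mulVec]
  have := nonneg_of_nonneg_one_sub_smul_mulVec hP hl0 hl1 (hcol ▸ Pi.single_nonneg.2 zero_le_one) i
  rwa [mulVec_single_one] at this

lemma sum_eq_of_vecMul_one_sub_smul_eq (hP : P ∈ rowStochastic R ι) (hl1 : l ≠ 1) {x v : ι → R}
    (h : x ᵥ* (1 - l • P) = (1 - l) • v) : ∑ i, x i = ∑ i, v i := by
  have hsum := congrArg (fun y : ι → R ↦ ∑ i, y i) h
  simp only [vecMul_sub, vecMul_one, vecMul_smul, Pi.sub_apply, Pi.smul_apply, smul_eq_mul,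
    sum_sub_distrib, ← mul_sum, sum_vecMul_of_mem_rowStochastic hP] at hsum
  exact mul_left_cancel₀ (sub_ne_zero.2 hl1.symm) (by linear_combination hsum)

end OrderedField

end Matrix

open Matrix

theorem stmt_5_general (n : ℕ) (P : Matrix (Fin n) (Fin n) ℝ)
    (hnonneg : ∀ i j, 0 ≤ P i j) (hrow : ∀ i, ∑ j, P i j = 1)
    (l : ℝ) (hl0 : 0 < l) (hl1 : l < 1)
    (v : Fin n → ℝ) (hv1 : ∑ i, v i = 1)
    (G : Matrix (Fin n) (Fin n) ℝ)
    (hG : ∀ i j, G i j = l * P i j + (1 - l) * v j)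
    (π : Fin n → ℝ)
    (hπ : π = Matrix.vecMul v ((1 - l) • (1 - l • P)⁻¹)) :
    (Matrix.vecMul π G = π ∧ ∑ i, π i = 1) ∧
    (∀ π' : Fin n → ℝ, Matrix.vecMul π' G = π' → ∑ i, π' i = 1 → π' = π) ∧
    ((∀ i, 0 < v i) → ∀ i, 0 < π i) := by
  have hP : P ∈ rowStochastic ℝ (Fin n) := mem_rowStochastic_iff_sum.2 ⟨hnonneg, hrow⟩
  have hA : IsUnit (1 - l • P) := isUnit_one_sub_smul_of_mem_rowStochastic hP hl0.le hl1
  have hfix_iff : ∀ x, ∑ i, x i = 1 → (x ᵥ* G = x ↔ x ᵥ* (1 - l • P) = (1 - l) • v) := by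
    intro x hx
    rw [vecMul_eq_smul_vecMul_add_smul hG, hx, mul_one, vecMul_sub, vecMul_one, vecMul_smul,
      sub_eq_iff_eq_add', eq_comm]
  have hπA : π ᵥ* (1 - l • P) = (1 - l) • v := by
    rw [hπ, vecMul_vecMul, smul_mul, nonsing_inv_mul _ ((isUnit_iff_isUnit_det _).1 hA),
      vecMul_smul, vecMul_one]
  have hsum : ∑ i, π i = 1 := hv1 ▸ sum_eq_of_vecMul_one_sub_smul_eq hP hl1.ne hπA
  refine ⟨⟨(hfix_iff π hsum).2 hπA, hsum⟩, fun π' hπ'G hπ'sum ↦ ?_, fun hvpos i ↦ ?_⟩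
  · exact vecMul_injective_of_isUnit hA (((hfix_iff π' hπ'sum).1 hπ'G).trans hπA.symm)
  · have hπ_nonneg : 0 ≤ π := by
      rw [hπ, vecMul_smul]
      exact smul_nonneg (sub_nonneg.2 hl1.le) fun k ↦ dotProduct_nonneg_of_nonneg
        (fun j ↦ (hvpos j).le) fun j ↦ inv_one_sub_smul_nonneg_of_mem_rowStochastic hP hl0.le hl1 j k
    have hπP : 0 ≤ (π ᵥ* P) i := nonneg_vecMul_of_mem_rowStochastic hP hπ_nonneg i
    have hπi := congrFun hπA i
    simp only [vecMul_sub, vecMul_one, vecMul_smul, Pi.sub_apply, Pi.smul_apply,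
      smul_eq_mul] at hπi
    linarith [mul_nonneg hl0.le hπP, mul_pos (sub_pos.2 hl1) (hvpos i)]

theorem stmt_5 (n : ℕ) (P : Matrix (Fin n) (Fin n) ℝ)
    (hnonneg : ∀ i j, 0 ≤ P i j) (hrow : ∀ i, ∑ j, P i j = 1)
    (l : ℝ) (hl0 : 0 < l) (hl1 : l < 1)
    (v : Fin n → ℝ) (hv : ∀ i, 0 ≤ v i) (hv1 : ∑ i, v i = 1)
    (G : Matrix (Fin n) (Fin n) ℝ)
    (hG : ∀ i j, G i j = l * P i j + (1 - l) * v j)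
    (π : Fin n → ℝ)
    (hπ : π = Matrix.vecMul v ((1 - l) • (1 - l • P)⁻¹)) :
    (Matrix.vecMul π G = π ∧ ∑ i, π i = 1) ∧
    (∀ π' : Fin n → ℝ, Matrix.vecMul π' G = π' → ∑ i, π' i = 1 → π' = π) ∧
    ((∀ i, 0 < v i) → ∀ i, 0 < π i) :=
  stmt_5_general n P hnonneg hrow l hl0 hl1 v hv1 G hG π hπ
end

section
/- Localization of personalized PageRank (discrete time): let P be an n×n row-stochastic matrix, λ ∈ (0,1), v any probability vector, and π^T = v^T X(λ) with X(λ) = (1−λ)(Id − λP)^{-1}. Then for every node i, min_j (X(λ))_{ji} ≤ π_i ≤ (X(λ))_{ii}. -/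
/-!
Write `M = (1 - λP)⁻¹`, so `X = (1 - λ)M`. Column `i` of `M` solves `m = e_i + λ P m`, and since
`P` is row-stochastic, `P m` is an average of `m`. This gives a maximum principle: at a minimum
of `m` the equation forces `m ≥ 0`, and at a maximum of `m` away from `i` it forces `m ≤ 0`.
So the column is nonnegative and largest at `i`. Then `π_i`, which is the `v`-average of
column `i` of `X`, lies between the smallest entry of that column and `X_ii`. `1 - λP` is
invertible because it is strictly diagonally dominant.
-/

open Finset

section WeightedAverage

variable {ι : Type*} [Fintype ι] {w c : ι → ℝ}

theorem dotProduct_le_of_forall_le (hw : ∀ j, 0 ≤ w j) (hw1 : ∑ j, w j = 1) {b : ℝ}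
    (hc : ∀ j, c j ≤ b) : w ⬝ᵥ c ≤ b :=
  calc w ⬝ᵥ c ≤ ∑ j, w j * b := sum_le_sum fun j _ => mul_le_mul_of_nonneg_left (hc j) (hw j)
    _ = b := by rw [← sum_mul, hw1, one_mul]

theorem le_dotProduct_of_forall_le (hw : ∀ j, 0 ≤ w j) (hw1 : ∑ j, w j = 1) {a : ℝ}
    (hc : ∀ j, a ≤ c j) : a ≤ w ⬝ᵥ c :=
  calc a = ∑ j, w j * a := by rw [← sum_mul, hw1, one_mul]
    _ ≤ w ⬝ᵥ c := sum_le_sum fun j _ => mul_le_mul_of_nonneg_left (hc j) (hw j)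

end WeightedAverage

namespace Matrix

variable {ι : Type*} [Fintype ι] [DecidableEq ι] {P M : Matrix ι ι ℝ} {l : ℝ}

theorem det_one_sub_smul_ne_zero_of_mem_rowStochastic (hP : P ∈ rowStochastic ℝ ι)
    (hl : |l| < 1) : (1 - l • P).det ≠ 0 := by
  refine det_ne_zero_of_sum_row_lt_diag fun k => ?_
  have hoff : ∑ j ∈ univ.erase k, ‖(1 - l • P) k j‖ = |l| * (1 - P k k) := by
    rw [← sum_row_of_mem_rowStochastic hP k, ← sum_erase_eq_sub (mem_univ k), mul_sum]
    refine sum_congr rfl fun j hj => ?_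
    simp [one_apply_ne' (ne_of_mem_erase hj), abs_of_nonneg (hP.1 k j)]
  have hdiag : 1 - |l| * P k k ≤ ‖(1 - l • P) k k‖ := by
    simp only [sub_apply, one_apply_eq, smul_apply, smul_eq_mul, Real.norm_eq_abs]
    exact (sub_le_sub_left (mul_le_mul_of_nonneg_right (le_abs_self l) (hP.1 k k)) 1).trans
      (le_abs_self _)
  linarith

theorem apply_eq_of_one_sub_smul_mul_eq_one (hM : (1 - l • P) * M = 1) (j i : ι) :
    M j i = (1 : Matrix ι ι ℝ) j i + l * (P *ᵥ fun k => M k i) j := by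
  rw [sub_mul, one_mul, smul_mul] at hM
  exact congrFun (congrFun (eq_add_of_sub_eq hM) j) i

theorem nonpos_of_le_smul_mulVec_of_forall_le (hP : P ∈ rowStochastic ℝ ι) (hl0 : 0 ≤ l)
    (hl1 : l < 1) {c : ι → ℝ} {j : ι} (hmax : ∀ k, c k ≤ c j) (h : c j ≤ l * (P *ᵥ c) j) :
    c j ≤ 0 := by
  have havg : (P *ᵥ c) j ≤ c j :=
    calc (P *ᵥ c) j ≤ ∑ k, P j k * c j :=
          sum_le_sum fun k _ => mul_le_mul_of_nonneg_left (hmax k) (hP.1 j k)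
      _ = c j := by rw [← sum_mul, sum_row_of_mem_rowStochastic hP j, one_mul]
  nlinarith [mul_le_mul_of_nonneg_left havg hl0]

theorem nonneg_of_one_sub_smul_mul_eq_one (hP : P ∈ rowStochastic ℝ ι) (hl0 : 0 ≤ l)
    (hl1 : l < 1) (hM : (1 - l • P) * M = 1) (j i : ι) : 0 ≤ M j i := by
  have : Nonempty ι := ⟨i⟩
  obtain ⟨j₀, hmin⟩ := Finite.exists_min fun k => M k i
  suffices -M j₀ i ≤ 0 from (neg_nonpos.1 this).trans (hmin j)
  refine nonpos_of_le_smul_mulVec_of_forall_le (c := -fun k => M k i) hP hl0 hl1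
    (fun k => neg_le_neg (hmin k)) ?_
  have hδ : 0 ≤ (1 : Matrix ι ι ℝ) j₀ i := by rw [one_apply]; positivity
  rw [mulVec_neg, Pi.neg_apply, Pi.neg_apply, apply_eq_of_one_sub_smul_mul_eq_one hM]
  linarith

theorem le_diag_of_one_sub_smul_mul_eq_one (hP : P ∈ rowStochastic ℝ ι) (hl0 : 0 ≤ l)
    (hl1 : l < 1) (hM : (1 - l • P) * M = 1) (j i : ι) : M j i ≤ M i i := by
  have : Nonempty ι := ⟨i⟩
  obtain ⟨j₁, hmax⟩ := Finite.exists_max fun k => M k i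
  refine (hmax j).trans ?_
  obtain rfl | hne := eq_or_ne j₁ i
  · rfl
  refine (nonpos_of_le_smul_mulVec_of_forall_le hP hl0 hl1 hmax ?_).trans
    (nonneg_of_one_sub_smul_mul_eq_one hP hl0 hl1 hM i i)
  rw [apply_eq_of_one_sub_smul_mul_eq_one hM, one_apply_ne hne, zero_add]

end Matrix

theorem stmt_8 (n : ℕ) (P : Matrix (Fin n) (Fin n) ℝ)
    (hnonneg : ∀ i j, 0 ≤ P i j) (hrow : ∀ i, ∑ j, P i j = 1)
    (l : ℝ) (hl0 : 0 < l) (hl1 : l < 1)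
    (v : Fin n → ℝ) (hv : ∀ i, 0 ≤ v i) (hv1 : ∑ i, v i = 1)
    (X : Matrix (Fin n) (Fin n) ℝ) (hX : X = (1 - l) • (1 - l • P)⁻¹)
    (π : Fin n → ℝ) (hπ : π = Matrix.vecMul v X) :
    ∀ i : Fin n,
      Finset.univ.inf' ⟨i, Finset.mem_univ i⟩ (fun j => X j i) ≤ π i ∧
      π i ≤ X i i := by
  intro i
  have hP : P ∈ Matrix.rowStochastic ℝ (Fin n) :=
    Matrix.mem_rowStochastic_iff_sum.2 ⟨hnonneg, hrow⟩
  have hM : (1 - l • P) * (1 - l • P)⁻¹ = 1 := Matrix.mul_nonsing_inv _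
    (Matrix.det_one_sub_smul_ne_zero_of_mem_rowStochastic hP
      (abs_lt.2 ⟨by linarith, hl1⟩)).isUnit
  have hπi : π i = v ⬝ᵥ fun j => X j i := by rw [hπ]; rfl
  refine ⟨hπi ▸ le_dotProduct_of_forall_le hv hv1 fun j => inf'_le _ (mem_univ j),
    hπi ▸ dotProduct_le_of_forall_le hv hv1 fun j => ?_⟩
  rw [hX, Matrix.smul_apply, Matrix.smul_apply, smul_eq_mul, smul_eq_mul]
  exact mul_le_mul_of_nonneg_left
    (Matrix.le_diag_of_one_sub_smul_mul_eq_one hP hl0.le hl1 hM j i) (by linarith)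
end

section
/- Let P₁, P₂ be n×n row-stochastic matrices, λ ∈ (0,1), and v a probability vector, with corresponding PageRank vectors π₁^T = v^T(1−λ)(Id−λP₁)^{-1} and π₂^T = v^T(1−λ)(Id−λP₂)^{-1}. Then ‖π₁ − π₂‖₁ ≤ (λ/(1−λ)) ‖P₁ − P₂‖_∞, where ‖·‖_∞ is the maximum absolute row-sum norm. Consequently the PageRank vector depends continuously on the stochastic matrix. -/
/-!
For `π = pageRank P λ v`, invertibility of `1 - λ P` turns the definition into the fixed-point
equation `π = (1 - λ) v + λ π P`. Right multiplication by a row-stochastic matrix does not increase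
the `ℓ¹` norm, so `‖π‖₁ ≤ ‖v‖₁`, and subtracting the two fixed-point equations gives
`π₁ - π₂ = λ π₁ (P₁ - P₂) + λ (π₁ - π₂) P₂`, whence
`‖π₁ - π₂‖₁ ≤ λ ‖v‖₁ ‖P₁ - P₂‖_∞ + λ ‖π₁ - π₂‖₁`.
-/

open Matrix Finset

variable {ι κ : Type*} [Fintype ι] [Fintype κ]

lemma sum_abs_vecMul_le_of_sum_abs_row_le (x : ι → ℝ) {M : Matrix ι κ ℝ} {c : ℝ}
    (hM : ∀ i, ∑ j, |M i j| ≤ c) : ∑ j, |(x ᵥ* M) j| ≤ (∑ i, |x i|) * c :=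
  calc ∑ j, |(x ᵥ* M) j| ≤ ∑ j, ∑ i, |x i| * |M i j| :=
        sum_le_sum fun j _ => by
          simpa only [vecMul, dotProduct, abs_mul] using abs_sum_le_sum_abs (fun i => x i * M i j) _
    _ = ∑ i, |x i| * ∑ j, |M i j| := by rw [sum_comm]; simp only [mul_sum]
    _ ≤ ∑ i, |x i| * c := sum_le_sum fun i _ => mul_le_mul_of_nonneg_left (hM i) (abs_nonneg _)
    _ = (∑ i, |x i|) * c := (sum_mul _ _ _).symm

lemma sum_abs_add_le (x y : ι → ℝ) : ∑ i, |(x + y) i| ≤ ∑ i, |x i| + ∑ i, |y i| :=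
  (sum_le_sum fun i _ => abs_add_le (x i) (y i)).trans_eq sum_add_distrib

lemma sum_abs_smul (c : ℝ) (x : ι → ℝ) : ∑ i, |(c • x) i| = |c| * ∑ i, |x i| := by
  simp only [Pi.smul_apply, smul_eq_mul, abs_mul, mul_sum]

variable [DecidableEq ι]

lemma sum_abs_vecMul_le_of_mem_rowStochastic (x : ι → ℝ) {P : Matrix ι ι ℝ}
    (hP : P ∈ rowStochastic ℝ ι) : ∑ j, |(x ᵥ* P) j| ≤ ∑ i, |x i| := by
  have hrow i : ∑ j, |P i j| ≤ 1 := by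
    simp only [abs_of_nonneg (nonneg_of_mem_rowStochastic hP), sum_row_of_mem_rowStochastic hP,
      le_refl]
  simpa only [mul_one] using sum_abs_vecMul_le_of_sum_abs_row_le x hrow

lemma isUnit_one_sub_smul_of_mem_rowStochastic {P : Matrix ι ι ℝ} (hP : P ∈ rowStochastic ℝ ι)
    {l : ℝ} (hl : |l| < 1) : IsUnit (1 - l • P) := by
  refine vecMul_injective_iff_isUnit.mp fun x y hxy => ?_
  set z := x - y
  have hz : z = l • (z ᵥ* P) := by
    have : z ᵥ* (1 - l • P) = 0 := by rw [sub_vecMul]; exact sub_eq_zero.mpr hxy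
    rwa [vecMul_sub, vecMul_one, vecMul_smul, sub_eq_zero] at this
  have hzP : ∑ i, |z i| ≤ |l| * ∑ i, |z i| :=
    calc ∑ i, |z i| = |l| * ∑ j, |(z ᵥ* P) j| := by rw [← sum_abs_smul, ← hz]
      _ ≤ |l| * ∑ i, |z i| :=
          mul_le_mul_of_nonneg_left (sum_abs_vecMul_le_of_mem_rowStochastic z hP) (abs_nonneg l)
  have hz0 : ∑ i, |z i| = 0 := by
    nlinarith [sum_nonneg fun i (_ : i ∈ univ) => abs_nonneg (z i), abs_nonneg l]
  exact sub_eq_zero.mp <| funext fun i =>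
    abs_eq_zero.mp ((sum_eq_zero_iff_of_nonneg fun j _ => abs_nonneg (z j)).mp hz0 i (mem_univ i))

noncomputable def pageRank (P : Matrix ι ι ℝ) (l : ℝ) (v : ι → ℝ) : ι → ℝ :=
  v ᵥ* ((1 - l) • (1 - l • P)⁻¹)

lemma pageRank_eq_smul_add_smul_vecMul {P : Matrix ι ι ℝ} (hP : P ∈ rowStochastic ℝ ι) {l : ℝ}
    (hl : |l| < 1) (v : ι → ℝ) :
    pageRank P l v = (1 - l) • v + l • (pageRank P l v ᵥ* P) := by
  have hdet : IsUnit (1 - l • P).det :=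
    (isUnit_iff_isUnit_det _).mp (isUnit_one_sub_smul_of_mem_rowStochastic hP hl)
  have h : pageRank P l v ᵥ* (1 - l • P) = (1 - l) • v := by
    rw [pageRank, vecMul_vecMul, smul_mul, nonsing_inv_mul _ hdet, vecMul_smul, vecMul_one]
  rw [vecMul_sub, vecMul_one, vecMul_smul, sub_eq_iff_eq_add] at h
  exact h

lemma sum_abs_pageRank_le {P : Matrix ι ι ℝ} (hP : P ∈ rowStochastic ℝ ι) {l : ℝ} (hl0 : 0 ≤ l)
    (hl1 : l < 1) (v : ι → ℝ) : ∑ i, |pageRank P l v i| ≤ ∑ i, |v i| := by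
  have hl : |l| < 1 := by rwa [abs_of_nonneg hl0]
  have h : ∑ i, |pageRank P l v i| ≤ (1 - l) * ∑ i, |v i| + l * ∑ i, |pageRank P l v i| :=
    calc ∑ i, |pageRank P l v i|
        ≤ |1 - l| * ∑ i, |v i| + |l| * ∑ i, |(pageRank P l v ᵥ* P) i| := by
          conv_lhs => rw [pageRank_eq_smul_add_smul_vecMul hP hl v]
          rw [← sum_abs_smul, ← sum_abs_smul]
          exact sum_abs_add_le _ _
      _ ≤ (1 - l) * ∑ i, |v i| + l * ∑ i, |pageRank P l v i| := by
          rw [abs_of_pos (sub_pos.mpr hl1), abs_of_nonneg hl0]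
          exact add_le_add_right
            (mul_le_mul_of_nonneg_left (sum_abs_vecMul_le_of_mem_rowStochastic _ hP) hl0) _
  nlinarith

lemma sum_abs_pageRank_sub_pageRank_le {P₁ P₂ : Matrix ι ι ℝ} (hP₁ : P₁ ∈ rowStochastic ℝ ι)
    (hP₂ : P₂ ∈ rowStochastic ℝ ι) {l : ℝ} (hl0 : 0 ≤ l) (hl1 : l < 1) (v : ι → ℝ) {c : ℝ}
    (hc0 : 0 ≤ c) (hc : ∀ i, ∑ j, |(P₁ - P₂) i j| ≤ c) :
    ∑ i, |pageRank P₁ l v i - pageRank P₂ l v i| ≤ l / (1 - l) * ((∑ i, |v i|) * c) := by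
  have hl : |l| < 1 := by rwa [abs_of_nonneg hl0]
  have hπ₁v := sum_abs_pageRank_le hP₁ hl0 hl1 v
  have hπ₁ := pageRank_eq_smul_add_smul_vecMul hP₁ hl v
  have hπ₂ := pageRank_eq_smul_add_smul_vecMul hP₂ hl v
  set π₁ := pageRank P₁ l v
  set π₂ := pageRank P₂ l v
  have hdiff : π₁ - π₂ = l • (π₁ ᵥ* (P₁ - P₂)) + l • ((π₁ - π₂) ᵥ* P₂) := by
    rw [vecMul_sub, sub_vecMul]
    conv_lhs => rw [hπ₁, hπ₂]
    module
  have h : ∑ i, |(π₁ - π₂) i| ≤ l * ((∑ i, |v i|) * c) + l * ∑ i, |(π₁ - π₂) i| :=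
    calc ∑ i, |(π₁ - π₂) i|
        ≤ |l| * ∑ i, |(π₁ ᵥ* (P₁ - P₂)) i| + |l| * ∑ i, |((π₁ - π₂) ᵥ* P₂) i| := by
          conv_lhs => rw [hdiff]
          rw [← sum_abs_smul, ← sum_abs_smul]
          exact sum_abs_add_le _ _
      _ ≤ l * ((∑ i, |π₁ i|) * c) + l * ∑ i, |(π₁ - π₂) i| := by
          rw [abs_of_nonneg hl0]
          exact add_le_add
            (mul_le_mul_of_nonneg_left (sum_abs_vecMul_le_of_sum_abs_row_le _ hc) hl0)
            (mul_le_mul_of_nonneg_left (sum_abs_vecMul_le_of_mem_rowStochastic _ hP₂) hl0)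
      _ ≤ l * ((∑ i, |v i|) * c) + l * ∑ i, |(π₁ - π₂) i| := by gcongr
  rw [div_mul_eq_mul_div, le_div_iff₀ (sub_pos.mpr hl1)]
  simpa only [Pi.sub_apply] using
    (by linarith : (∑ i, |(π₁ - π₂) i|) * (1 - l) ≤ l * ((∑ i, |v i|) * c))

theorem stmt_10 (n : ℕ) (hn : 0 < n)
    (P₁ P₂ : Matrix (Fin n) (Fin n) ℝ)
    (h1 : ∀ i j, 0 ≤ P₁ i j) (h1row : ∀ i, ∑ j, P₁ i j = 1)
    (h2 : ∀ i j, 0 ≤ P₂ i j) (h2row : ∀ i, ∑ j, P₂ i j = 1)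
    (l : ℝ) (hl0 : 0 < l) (hl1 : l < 1)
    (v : Fin n → ℝ) (hv : ∀ i, 0 ≤ v i) (hv1 : ∑ i, v i = 1)
    (π₁ π₂ : Fin n → ℝ)
    (hπ1 : π₁ = Matrix.vecMul v ((1 - l) • (1 - l • P₁)⁻¹))
    (hπ2 : π₂ = Matrix.vecMul v ((1 - l) • (1 - l • P₂)⁻¹)) :
    ∑ i, |π₁ i - π₂ i| ≤ (l / (1 - l)) *
      Finset.univ.sup' (⟨⟨0, hn⟩, Finset.mem_univ _⟩ :
        (Finset.univ : Finset (Fin n)).Nonempty)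
        (fun i => ∑ j, |P₁ i j - P₂ i j|) := by
  have hrow i : ∑ j, |(P₁ - P₂) i j| ≤ univ.sup' ⟨⟨0, hn⟩, mem_univ _⟩
      (fun i => ∑ j, |P₁ i j - P₂ i j|) :=
    le_sup' (fun i => ∑ j, |P₁ i j - P₂ i j|) (mem_univ i)
  have hv' : ∑ i, |v i| = 1 := by simpa only [abs_of_nonneg (hv _)] using hv1
  have h := sum_abs_pageRank_sub_pageRank_le (mem_rowStochastic_iff_sum.mpr ⟨h1, h1row⟩)
    (mem_rowStochastic_iff_sum.mpr ⟨h2, h2row⟩) hl0.le hl1 v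
    ((sum_nonneg fun j _ => abs_nonneg _).trans (hrow ⟨0, hn⟩)) hrow
  rw [hv', one_mul] at h
  rwa [hπ1, hπ2]
end

section
/- Let P be a row-stochastic n×n matrix and v₁, v₂ probability vectors, λ ∈ (0,1), with π_k^T = v_k^T (1−λ)(Id−λP)^{-1} for k = 1,2. Then ‖π₁ − π₂‖₁ ≤ ‖v₁ − v₂‖₁; in particular the map from personalization vectors to PageRank vectors is 1-Lipschitz in the ℓ¹ norm. -/
theorem stmt_11 (n : ℕ) (P : Matrix (Fin n) (Fin n) ℝ)
    (hnonneg : ∀ i j, 0 ≤ P i j) (hrow : ∀ i, ∑ j, P i j = 1)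
    (l : ℝ) (hl0 : 0 < l) (hl1 : l < 1)
    (v₁ v₂ : Fin n → ℝ)
    (hv₁ : ∀ i, 0 ≤ v₁ i) (hv₁1 : ∑ i, v₁ i = 1)
    (hv₂ : ∀ i, 0 ≤ v₂ i) (hv₂1 : ∑ i, v₂ i = 1)
    (π₁ π₂ : Fin n → ℝ)
    (hπ1 : π₁ = Matrix.vecMul v₁ ((1 - l) • (1 - l • P)⁻¹))
    (hπ2 : π₂ = Matrix.vecMul v₂ ((1 - l) • (1 - l • P)⁻¹)) :
    ∑ i, |π₁ i - π₂ i| ≤ ∑ i, |v₁ i - v₂ i| := by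
  subst hπ1 hπ2
  set A : Matrix (Fin n) (Fin n) ℝ := 1 - l • P with hA
  by_cases hdet : IsUnit A.det
  · set B : Matrix (Fin n) (Fin n) ℝ := A⁻¹ with hB
    have hAB : A * B = 1 := Matrix.mul_nonsing_inv _ hdet
    have hBA : B * A = 1 := Matrix.nonsing_inv_mul _ hdet
    -- entrywise equation from A * B = 1
    have key : ∀ m i, B m i = l * ∑ k, P m k * B k i + (if m = i then 1 else 0) := by
      intro m i
      have h := congrFun (congrFun hAB m) i
      simp only [Matrix.mul_apply, hA, Matrix.sub_apply, Matrix.one_apply,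
        Matrix.smul_apply, smul_eq_mul, sub_mul, Finset.sum_sub_distrib,
        ite_mul, one_mul, zero_mul, Finset.sum_ite_eq, Finset.mem_univ,
        if_true, Finset.mul_sum, mul_assoc] at h ⊢
      linarith [h]
    -- nonnegativity of B
    have hBnn : ∀ j i, 0 ≤ B j i := by
      intro j i
      obtain ⟨j0, -, hj0⟩ := Finset.exists_min_image Finset.univ (fun j => B j i)
        ⟨j, Finset.mem_univ j⟩
      have h1 : B j0 i ≤ ∑ k, P j0 k * B k i := by
        calc B j0 i = ∑ k, P j0 k * B j0 i := by rw [← Finset.sum_mul, hrow, one_mul]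
        _ ≤ ∑ k, P j0 k * B k i :=
          Finset.sum_le_sum fun k _ => mul_le_mul_of_nonneg_left (hj0 k (Finset.mem_univ k))
            (hnonneg j0 k)
      have h2 := key j0 i
      have h3 : (0:ℝ) ≤ (if j0 = i then (1:ℝ) else 0) := by positivity
      have h4 : 0 ≤ B j0 i := by nlinarith
      exact le_trans h4 (hj0 j (Finset.mem_univ j))
    -- row sums of B
    have hrowB : ∀ j, ∑ i, B j i = 1 / (1 - l) := by
      intro j
      have hArow : ∀ k, ∑ i, A k i = 1 - l := by
        intro k
        simp only [hA, Matrix.sub_apply, Matrix.one_apply, Matrix.smul_apply, smul_eq_mul,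
          Finset.sum_sub_distrib, Finset.sum_ite_eq, Finset.mem_univ, if_true,
          ← Finset.mul_sum, hrow k, mul_one]
      have h1 : ∑ i, (B * A) j i = 1 := by
        rw [hBA]
        simp [Matrix.one_apply]
      have h2 : ∑ i, (B * A) j i = (∑ k, B j k) * (1 - l) := by
        simp only [Matrix.mul_apply]
        rw [Finset.sum_comm, Finset.sum_mul]
        exact Finset.sum_congr rfl fun k _ => by rw [← Finset.mul_sum, hArow k]
      have hl' : (1:ℝ) - l ≠ 0 := by linarith
      field_simp at h2 ⊢
      linarith [h1, h2]
    -- main estimate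
    have hvm : ∀ (v : Fin n → ℝ) i,
        Matrix.vecMul v ((1 - l) • B) i = ∑ j, v j * ((1 - l) * B j i) := by
      intro v i
      simp [Matrix.vecMul, dotProduct, Matrix.smul_apply, mul_comm]
    calc ∑ i, |Matrix.vecMul v₁ ((1 - l) • B) i - Matrix.vecMul v₂ ((1 - l) • B) i|
        = ∑ i, |∑ j, (v₁ j - v₂ j) * ((1 - l) * B j i)| := by
          refine Finset.sum_congr rfl fun i _ => ?_
          rw [hvm v₁ i, hvm v₂ i, ← Finset.sum_sub_distrib]
          congr 1
          exact Finset.sum_congr rfl fun j _ => by ring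
      _ ≤ ∑ i, ∑ j, |v₁ j - v₂ j| * ((1 - l) * B j i) := by
          refine Finset.sum_le_sum fun i _ => ?_
          refine le_trans (Finset.abs_sum_le_sum_abs _ _) (Finset.sum_le_sum fun j _ => ?_)
          rw [abs_mul]
          have : (0:ℝ) ≤ (1 - l) * B j i := by
            have := hBnn j i; nlinarith
          rw [abs_of_nonneg this]
      _ = ∑ j, |v₁ j - v₂ j| := by
          rw [Finset.sum_comm]
          refine Finset.sum_congr rfl fun j _ => ?_
          rw [← Finset.mul_sum, ← Finset.mul_sum, hrowB j]
          have hl' : (1:ℝ) - l ≠ 0 := by linarith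
          field_simp
  · rw [Matrix.nonsing_inv_apply_not_isUnit _ hdet]
    simp only [smul_zero, Matrix.vecMul_zero, Pi.zero_apply, sub_zero, abs_zero,
      Finset.sum_const_zero]
    positivity
end

section
/- Let ω : [t₀,t₁]² → [0,∞) be continuous on [t₀,t₀+ε]² for some ε > 0 with ω(t₀,t₀) ≠ 0, and let a₁,…,a_n : [t₀,t₁] → [0,∞) be right-continuous at t₀ with ∑_{k=1}^n a_k(t₀) > 0. Then for each j, the quotient (∫_{t₀}^t ω(s,t)a_j(s) ds) / (∑_{k=1}^n ∫_{t₀}^t ω(s,t)a_k(s) ds) converges to a_j(t₀)/∑_{k=1}^n a_k(t₀) as t → t₀⁺. -/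
open MeasureTheory intervalIntegral Set Filter Topology

/-!
After dividing numerator and denominator by `t - t₀`, each integral becomes the mean of
`s ↦ ω s t * a k s` over `[t₀, t]`. This integrand tends to `ω t₀ t₀ * a k t₀` jointly as
`t₀ < s ≤ t → t₀`, hence so does its mean, and the common factor `ω t₀ t₀ ≠ 0` cancels in the
limit of the ratio.
-/

theorem tendsto_inv_mul_integral_of_tendsto_uncurry {E : Type*} [NormedAddCommGroup E]
    [NormedSpace ℝ E] [CompleteSpace E] {g : ℝ → ℝ → E} {a : ℝ} {L : E}
    (hg : Tendsto (Function.uncurry g) (𝓝[>] a ×ˢ 𝓝[>] a) (𝓝 L))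
    (hint : ∀ᶠ t in 𝓝[>] a, IntervalIntegrable (fun s => g s t) volume a t) :
    Tendsto (fun t => (t - a)⁻¹ • ∫ s in a..t, g s t) (𝓝[>] a) (𝓝 L) := by
  rw [Metric.tendsto_nhds]
  intro η hη
  obtain ⟨U, hU, hUg⟩ := (eventually_prod_self_iff (r := fun s t => dist (g s t) L < η / 2)).mp
    (Metric.tendsto_nhds.mp hg (η / 2) (half_pos hη))
  obtain ⟨b, hab, hb⟩ := mem_nhdsGT_iff_exists_Ioo_subset.mp hU
  filter_upwards [hint, Ioo_mem_nhdsGT hab] with t ht_int ⟨hat, htb⟩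
  have hta : 0 < t - a := sub_pos.mpr hat
  have hclose : ∀ s ∈ uIoc a t, ‖g s t - L‖ ≤ η / 2 := by
    intro s hs
    rw [uIoc_of_le hat.le] at hs
    rw [← dist_eq_norm]
    exact (hUg s (hb ⟨hs.1, hs.2.trans_lt htb⟩) t (hb ⟨hat, htb⟩)).le
  have hmean : (t - a)⁻¹ • (∫ s in a..t, g s t) - L
      = (t - a)⁻¹ • ∫ s in a..t, (g s t - L) := by
    rw [integral_sub ht_int intervalIntegrable_const, intervalIntegral.integral_const, smul_sub,
      inv_smul_smul₀ hta.ne']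
  rw [dist_eq_norm, hmean, norm_smul, norm_inv, Real.norm_of_nonneg hta.le]
  calc (t - a)⁻¹ * ‖∫ s in a..t, (g s t - L)‖
      ≤ (t - a)⁻¹ * (η / 2 * |t - a|) :=
        mul_le_mul_of_nonneg_left (norm_integral_le_of_norm_le_const hclose) (by positivity)
    _ = η / 2 := by rw [abs_of_pos hta]; field_simp
    _ < η := half_lt_self hη

theorem tendsto_div_sum_of_tendsto_inv_mul {ι α : Type*} [Fintype ι] {l : Filter α}
    {f : ι → α → ℝ} {g : α → ℝ} {c : ℝ} {b : ι → ℝ}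
    (hf : ∀ k, Tendsto (fun x => (g x)⁻¹ * f k x) l (𝓝 (c * b k)))
    (hg : ∀ᶠ x in l, g x ≠ 0) (hc : c ≠ 0) (hb : ∑ k, b k ≠ 0) (j : ι) :
    Tendsto (fun x => f j x / ∑ k, f k x) l (𝓝 (b j / ∑ k, b k)) := by
  have hsum : Tendsto (fun x => ∑ k, (g x)⁻¹ * f k x) l (𝓝 (c * ∑ k, b k)) := by
    rw [Finset.mul_sum]
    exact tendsto_finsetSum _ fun k _ => hf k
  have hdiv := (hf j).div hsum (mul_ne_zero hc hb)
  rw [mul_div_mul_left _ _ hc] at hdiv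
  refine hdiv.congr' ?_
  filter_upwards [hg] with x hx
  rw [Pi.div_apply, ← Finset.mul_sum, mul_div_mul_left _ _ (inv_ne_zero hx)]

theorem stmt_12_general (n : ℕ) (t₀ t₁ : ℝ) (ht : t₀ < t₁)
    (ω : ℝ → ℝ → ℝ) (a : Fin n → ℝ → ℝ)
    (ε : ℝ) (hε : 0 < ε)
    (hωcont : ContinuousOn (fun p : ℝ × ℝ => ω p.1 p.2)
      (Icc t₀ (t₀ + ε) ×ˢ Icc t₀ (t₀ + ε)))
    (hω0 : ω t₀ t₀ ≠ 0)
    (hacont : ∀ k, Tendsto (a k) (nhdsWithin t₀ (Ici t₀)) (nhds (a k t₀)))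
    (hint : ∀ k, ∀ t ∈ Icc t₀ t₁,
      IntervalIntegrable (fun s => ω s t * a k s) volume t₀ t)
    (hsum : 0 < ∑ k, a k t₀) :
    ∀ j, Tendsto
      (fun t => (∫ s in t₀..t, ω s t * a j s) /
        ∑ k, ∫ s in t₀..t, ω s t * a k s)
      (nhdsWithin t₀ (Ioi t₀))
      (nhds (a j t₀ / ∑ k, a k t₀)) := by
  have hcorner : 𝓝[>] t₀ ×ˢ 𝓝[>] t₀ ≤ 𝓝[Icc t₀ (t₀ + ε) ×ˢ Icc t₀ (t₀ + ε)] (t₀, t₀) := by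
    rw [nhdsWithin_prod_eq, nhdsWithin_Icc_eq_nhdsGE (by linarith)]
    exact prod_mono (nhdsWithin_mono _ Ioi_subset_Ici_self) (nhdsWithin_mono _ Ioi_subset_Ici_self)
  have hω : Tendsto (fun p : ℝ × ℝ => ω p.1 p.2) (𝓝[>] t₀ ×ˢ 𝓝[>] t₀) (𝓝 (ω t₀ t₀)) :=
    ((hωcont _ ⟨⟨le_rfl, by linarith⟩, ⟨le_rfl, by linarith⟩⟩).tendsto).mono_left hcorner
  have hmean : ∀ k, Tendsto (fun t => (t - t₀)⁻¹ * ∫ s in t₀..t, ω s t * a k s)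
      (𝓝[>] t₀) (𝓝 (ω t₀ t₀ * a k t₀)) := fun k =>
    tendsto_inv_mul_integral_of_tendsto_uncurry
      (hω.mul (((hacont k).mono_left (nhdsWithin_mono _ Ioi_subset_Ici_self)).comp tendsto_fst))
      (by filter_upwards [Ioo_mem_nhdsGT ht] with t ht' using hint k t (Ioo_subset_Icc_self ht'))
  exact tendsto_div_sum_of_tendsto_inv_mul hmean
    (by filter_upwards [self_mem_nhdsWithin] with t ht' using sub_ne_zero.mpr (ne_of_gt ht'))
    hω0 hsum.ne'

theorem stmt_12 (n : ℕ) (t₀ t₁ : ℝ) (ht : t₀ < t₁)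
    (ω : ℝ → ℝ → ℝ) (a : Fin n → ℝ → ℝ)
    (hωnn : ∀ s t, 0 ≤ ω s t) (hann : ∀ k s, 0 ≤ a k s)
    (ε : ℝ) (hε : 0 < ε)
    (hωcont : ContinuousOn (fun p : ℝ × ℝ => ω p.1 p.2)
      (Icc t₀ (t₀ + ε) ×ˢ Icc t₀ (t₀ + ε)))
    (hω0 : ω t₀ t₀ ≠ 0)
    (hacont : ∀ k, Tendsto (a k) (nhdsWithin t₀ (Ici t₀)) (nhds (a k t₀)))
    (hint : ∀ k, ∀ t ∈ Icc t₀ t₁,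
      IntervalIntegrable (fun s => ω s t * a k s) volume t₀ t)
    (hsum : 0 < ∑ k, a k t₀) :
    ∀ j, Tendsto
      (fun t => (∫ s in t₀..t, ω s t * a j s) /
        ∑ k, ∫ s in t₀..t, ω s t * a k s)
      (nhdsWithin t₀ (Ioi t₀))
      (nhds (a j t₀ / ∑ k, a k t₀)) :=
  stmt_12_general n t₀ t₁ ht ω a ε hε hωcont hω0 hacont hint hsum
end
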